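/- arXiv:2605.22250 — 4 statements merged into one kernel-verified Lean document; each statement's English description precedes it below -/
import Mathlib

section
/- The quotient ring H = ℂ[A,X,Y]/(f) is an integral domain. -/
/-!
Under `finSuccEquiv`, `f` becomes the monic quadratic `T² - g` over the factorial ring `ℂ[X, Y]`,
with `g = X Y (X² - Y)`. By Gauss's lemma over an integrally closed domain, `T² - g` is
irreducible as soon as `g` is not a square, and `g` is not a square because setting `Y = 1`
leaves `X (X² - 1)`, of odd degree. In a factorial ring irreducible elements are prime, so
`(f)` is a prime ideal.
-/

open scoped Polynomial

theorem Polynomial.irreducible_X_pow_sub_C_of_prime {R : Type*} [CommRing R] [IsDomain R]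
    [IsIntegrallyClosed R] {p : ℕ} (hp : p.Prime) {a : R} (ha : ∀ b : R, b ^ p ≠ a) :
    Irreducible (X ^ p - C a : R[X]) := by
  have hmonic : (X ^ p - C a : R[X]).Monic := monic_X_pow_sub_C a hp.ne_zero
  rw [hmonic.irreducible_iff_irreducible_map_fraction_map (K := FractionRing R)]
  simp only [Polynomial.map_sub, Polynomial.map_pow, map_X, map_C]
  refine X_pow_sub_C_irreducible_of_prime hp fun b hb => ?_
  obtain ⟨y, rfl⟩ := IsIntegrallyClosed.isIntegral_iff.mp
    (⟨_, hmonic, by simp [eval₂_sub, hb]⟩ : IsIntegral R b)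
  exact ha y (IsFractionRing.injective R (FractionRing R) (by rw [map_pow, hb]))

open MvPolynomial

theorem MvPolynomial.finSuccEquiv_rename_succ {R : Type*} [CommSemiring R] {n : ℕ}
    (g : MvPolynomial (Fin n) R) : finSuccEquiv R n (rename Fin.succ g) = Polynomial.C g := by
  induction g using MvPolynomial.induction_on with
  | C r => simp [finSuccEquiv_apply]
  | add p q hp hq => simp [hp, hq]
  | mul_X p j hp => simp [hp, finSuccEquiv_X_succ]

theorem MvPolynomial.prime_X_zero_pow_sub_rename_succ {R : Type*} [CommRing R] [IsDomain R]
    [UniqueFactorizationMonoid R] {n p : ℕ} (hp : p.Prime) {g : MvPolynomial (Fin n) R}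
    (hg : ∀ b, b ^ p ≠ g) :
    Prime (X 0 ^ p - rename Fin.succ g : MvPolynomial (Fin (n + 1)) R) := by
  rw [← MulEquiv.prime_iff (finSuccEquiv R n).toMulEquiv]
  change Prime (finSuccEquiv R n _)
  rw [map_sub, map_pow, finSuccEquiv_X_zero, finSuccEquiv_rename_succ]
  exact (Polynomial.irreducible_X_pow_sub_C_of_prime hp hg).prime

theorem MvPolynomial.sq_ne_X_mul_X_mul_X_sq_sub_X {K : Type*} [CommRing K] [IsDomain K]
    (b : MvPolynomial (Fin 2) K) : b ^ 2 ≠ X 0 * X 1 * (X 0 ^ 2 - X 1) := by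
  intro h
  let φ := aeval (R := K) ![(Polynomial.X : K[X]), 1]
  have hdeg : (Polynomial.X * (Polynomial.X ^ 2 - 1) : K[X]).natDegree = 3 := by
    compute_degree!
  have hφ : φ b ^ 2 = Polynomial.X * (Polynomial.X ^ 2 - 1) := by
    rw [← map_pow, h]; simp [φ]
  rw [← hφ, Polynomial.natDegree_pow] at hdeg
  omega

/-- `H = ℂ[A,X,Y]/(f)` with `f = A² − X·Y·(X² − Y)` is an integral domain.
Variables: `A = X 0`, `X = X 1`, `Y = X 2`. -/
theorem stmt_2 :
    IsDomain (MvPolynomial (Fin 3) ℂ ⧸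
      Ideal.span {((X 0) ^ 2 - X 1 * X 2 * ((X 1) ^ 2 - X 2) :
        MvPolynomial (Fin 3) ℂ)}) := by
  have hf : (X 0 ^ 2 - X 1 * X 2 * (X 1 ^ 2 - X 2) : MvPolynomial (Fin 3) ℂ) =
      X 0 ^ 2 - rename Fin.succ (X 0 * X 1 * (X 0 ^ 2 - X 1)) := by
    simp
  have hprime :=
    prime_X_zero_pow_sub_rename_succ Nat.prime_two (sq_ne_X_mul_X_mul_X_sq_sub_X (K := ℂ))
  rw [Ideal.Quotient.isDomain_iff_prime, hf, Ideal.span_singleton_prime hprime.ne_zero]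
  exact hprime
end

section
/- The image of T in R = ℂ[A,B,C,D,T]/I_T is not a zero divisor. -/
open MvPolynomial

/-- Variables: `A = X 0`, `B = X 1`, `C = X 2`, `D = X 3`, `T = X 4`. -/
noncomputable def m₁ : MvPolynomial (Fin 5) ℂ :=
  ((X 0) ^ 2 + (X 4) ^ 5) * (X 0) ^ 2 - X 1 * X 2

noncomputable def m₂ : MvPolynomial (Fin 5) ℂ :=
  ((X 0) ^ 2 + (X 4) ^ 5) * ((X 1) ^ 2 - X 3) - X 2 * X 3

noncomputable def m₃ : MvPolynomial (Fin 5) ℂ :=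
  X 1 * ((X 1) ^ 2 - X 3) - (X 0) ^ 2 * X 3

/-- The ideal generated by the three 2×2 minors of
`[[A² + T⁵, B, D], [C, A², B² − D]]`. -/
noncomputable def I_T : Ideal (MvPolynomial (Fin 5) ℂ) :=
  Ideal.span {m₁, m₂, m₃}

/-!
Write `σ` for the substitution `T ↦ 0` and `n₁, n₂, n₃ = m₃` for the minors of
`M₀ = [[A², B, D], [C, A², B² − D]]`. If `f·T = a m₁ + b m₂ + c m₃`, then `(σ a, σ b, σ c)` is a
syzygy of `n₁, n₂, n₃`. Since `m₃ = B³ − (B + A²)·D` is prime (linear in `D` with coprime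
coefficients) and `B` is prime, every such syzygy is a combination
`u·(D, −B, A²) + v·(B² − D, −A², C)` of the rows of `M₀` (Hilbert–Burch). The rows of `M₀` are
syzygies of `m₁, m₂, m₃` up to the error `−T⁵·m₃`, so subtracting the lifted combination leaves a
relation all of whose coefficients are divisible by `T`; cancelling `T` puts `f` in `I_T`.
-/

theorem MvPolynomial.X_dvd_sub_aeval_update_zero {R σ : Type*} [CommRing R] [DecidableEq σ]
    (i : σ) (p : MvPolynomial σ R) : X i ∣ p - aeval (Function.update X i 0) p := by
  have h : (Ideal.Quotient.mkₐ R (Ideal.span {X i})).comp (aeval (Function.update X i 0)) =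
      Ideal.Quotient.mkₐ R (Ideal.span {(X i : MvPolynomial σ R)}) := by
    ext j
    obtain rfl | hj := eq_or_ne j i
    · simp
    · simp [hj]
  rw [← Ideal.mem_span_singleton, ← Ideal.Quotient.eq]
  exact (congr($h p)).symm

theorem prime_m₃ : Prime m₃ := by
  let e := (renameEquiv ℂ (finSuccEquiv' (3 : Fin 5))).trans (optionEquivLeft ℂ (Fin 4))
  have he : e m₃ =
      Polynomial.C (-(X 1 + X 0 ^ 2)) * Polynomial.X + Polynomial.C (X 1 ^ 3) := by
    have h0 : finSuccEquiv' (3 : Fin 5) 0 = some 0 := rfl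
    have h1 : finSuccEquiv' (3 : Fin 5) 1 = some 1 := rfl
    have h3 : finSuccEquiv' (3 : Fin 5) 3 = none := rfl
    simp [m₃, e, h0, h1, h3, optionEquivLeft_X_some, optionEquivLeft_X_none]
    ring
  have hB : Prime (X 1 : MvPolynomial (Fin 4) ℂ) := X_prime
  have hcop : IsRelPrime (-(X 1 + X 0 ^ 2)) (X 1 ^ 3 : MvPolynomial (Fin 4) ℂ) := by
    refine (IsRelPrime.pow_left ?_).symm.neg_left
    rw [hB.irreducible.isRelPrime_iff_not_dvd, dvd_add_right dvd_rfl]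
    exact fun h => by simpa using hB.dvd_of_dvd_pow h
  have hne : (-(X 1 + X 0 ^ 2) : MvPolynomial (Fin 4) ℂ) ≠ 0 := by
    intro h
    simpa using congr(eval (fun _ => 1) $h)
  rw [← MulEquiv.prime_iff e.toMulEquiv]
  show Prime (e _)
  rw [he]
  exact (Polynomial.irreducible_C_mul_X_add_C hne hcop).prime

theorem exists_rows_combination_of_syzygy {a b c : MvPolynomial (Fin 5) ℂ}
    (h : a * (X 0 ^ 4 - X 1 * X 2) + b * (X 0 ^ 2 * (X 1 ^ 2 - X 3) - X 2 * X 3)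
      + c * (X 1 * (X 1 ^ 2 - X 3) - X 0 ^ 2 * X 3) = 0) :
    ∃ u v, a = u * X 3 + v * (X 1 ^ 2 - X 3) ∧ b = -(u * X 1) - v * X 0 ^ 2 ∧
      c = u * X 0 ^ 2 + v * X 2 := by
  set n₁ : MvPolynomial (Fin 5) ℂ := X 0 ^ 4 - X 1 * X 2
  set n₃ : MvPolynomial (Fin 5) ℂ := X 1 * (X 1 ^ 2 - X 3) - X 0 ^ 2 * X 3
  have hn₃ : Prime n₃ := prime_m₃
  have hB : Prime (X 1 : MvPolynomial (Fin 5) ℂ) := X_prime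
  have hn₃n₁ : ¬ n₃ ∣ n₁ := fun h => by
    simpa [n₁, n₃] using map_dvd (eval (Pi.single 0 1)) h
  obtain ⟨v, hv⟩ : n₃ ∣ a * X 1 + b * X 3 :=
    (hn₃.dvd_or_dvd ⟨-(b * X 0 ^ 2 + c * X 1), by linear_combination X 1 * h⟩).resolve_right hn₃n₁
  have hbc : b * X 0 ^ 2 + c * X 1 = -(v * n₁) := by
    refine mul_left_cancel₀ hn₃.ne_zero ?_
    linear_combination X 1 * h - n₁ * hv
  obtain ⟨w, hw⟩ : X 1 ∣ b + v * X 0 ^ 2 := by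
    have : X 1 ∣ (b + v * X 0 ^ 2) * X 3 := ⟨v * (X 1 ^ 2 - X 3) - a, by linear_combination hv⟩
    exact (hB.dvd_or_dvd this).resolve_right (by simp)
  refine ⟨-w, v, mul_left_cancel₀ hB.ne_zero ?_, by linear_combination hw,
    mul_left_cancel₀ hB.ne_zero ?_⟩
  · linear_combination hv - X 3 * hw
  · linear_combination hbc - X 0 ^ 2 * hw

theorem mem_I_T_iff {f : MvPolynomial (Fin 5) ℂ} :
    f ∈ I_T ↔ ∃ a b c, a * m₁ + b * m₂ + c * m₃ = f := by
  simp only [I_T, Ideal.mem_span_insert, Ideal.mem_span_singleton']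
  constructor
  · rintro ⟨a, _, ⟨b, _, ⟨c, rfl⟩, rfl⟩, rfl⟩
    exact ⟨a, b, c, by ring⟩
  · rintro ⟨a, b, c, rfl⟩
    exact ⟨a, _, ⟨b, _, ⟨c, rfl⟩, rfl⟩, by ring⟩

theorem row₁_syzygy : X 3 * m₁ - X 1 * m₂ + X 0 ^ 2 * m₃ = -(X 4 ^ 5 * m₃) := by
  simp only [m₁, m₂, m₃]; ring

theorem row₂_syzygy : (X 1 ^ 2 - X 3) * m₁ - X 0 ^ 2 * m₂ + X 2 * m₃ = 0 := by
  simp only [m₁, m₂, m₃]; ring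

/-- The image of `T` in `R = ℂ[A,B,C,D,T]/I_T` is not a zero divisor. -/
theorem stmt_5 :
    Ideal.Quotient.mk I_T (X 4) ∈
      nonZeroDivisors (MvPolynomial (Fin 5) ℂ ⧸ I_T) := by
  rw [mem_nonZeroDivisors_iff_right]
  intro x hx
  obtain ⟨f, rfl⟩ := Ideal.Quotient.mk_surjective x
  rw [← map_mul, Ideal.Quotient.eq_zero_iff_mem] at hx
  rw [Ideal.Quotient.eq_zero_iff_mem]
  obtain ⟨a, b, c, hfT⟩ := mem_I_T_iff.1 hx
  set σ := aeval (R := ℂ) (Function.update X (4 : Fin 5) (0 : MvPolynomial (Fin 5) ℂ))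
  obtain ⟨u, v, hu, hv, hw⟩ :=
      exists_rows_combination_of_syzygy (a := σ a) (b := σ b) (c := σ c) <| by
    have hσ := congr(σ $hfT)
    simp [σ, m₁, m₂, m₃, -aeval_eq_bind₁] at hσ
    linear_combination hσ
  obtain ⟨a₁, ha₁⟩ := X_dvd_sub_aeval_update_zero 4 a
  obtain ⟨b₁, hb₁⟩ := X_dvd_sub_aeval_update_zero 4 b
  obtain ⟨c₁, hc₁⟩ := X_dvd_sub_aeval_update_zero 4 c
  refine mem_I_T_iff.2 ⟨a₁, b₁, c₁ - u * X 4 ^ 4, mul_left_cancel₀ (X_ne_zero 4) ?_⟩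
  linear_combination hfT - m₁ * ha₁ - m₂ * hb₁ - m₃ * hc₁ - m₁ * hu - m₂ * hv - m₃ * hw
    - u * row₁_syzygy - v * row₂_syzygy
end

section
/- The Krull dimension of the ring R = ℂ[A,B,C,D,T]/I_T equals 3. -/
open MvPolynomial

open MvPolynomial Polynomial in
lemma poly_trailing_mem {B A : Type*} [CommRing B] [CommRing A] (φ : B →+* A)
    {p0 p1 : Ideal A} [hp0 : p0.IsPrime] (h01 : p0 ≤ p1)
    {x : A} (hx0 : x ∉ p0) (hx1 : x ∈ p1) :
    ∀ (n : ℕ) (P : Polynomial B), P.natDegree ≤ n → P ≠ 0 → Polynomial.eval₂ φ x P ∈ p0 →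
      ∃ j, P.coeff j ≠ 0 ∧ φ (P.coeff j) ∈ p1 := by
  intro n
  induction n with
  | zero =>
    intro P hdeg hP hmem
    refine ⟨0, fun h => hP ?_, ?_⟩
    · rw [Polynomial.eq_C_of_natDegree_le_zero hdeg, h, map_zero]
    · rw [Polynomial.eq_C_of_natDegree_le_zero hdeg, Polynomial.eval₂_C] at hmem
      exact h01 hmem
  | succ n ih =>
    intro P hdeg hP hmem
    have hsplit : Polynomial.eval₂ φ x P
        = Polynomial.eval₂ φ x P.divX * x + φ (P.coeff 0) := by
      conv_lhs => rw [← P.divX_mul_X_add]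
      simp [Polynomial.eval₂_add, Polynomial.eval₂_mul]
    by_cases hc : P.coeff 0 = 0
    · have hP' : P.divX ≠ 0 := by
        intro h
        apply hP
        rw [← P.divX_mul_X_add, h, hc]; simp
      have hdeg' : P.divX.natDegree ≤ n := by
        rw [Polynomial.natDegree_divX_eq_natDegree_tsub_one]
        omega
      have hmem' : Polynomial.eval₂ φ x P.divX ∈ p0 := by
        rw [hsplit, hc, map_zero, add_zero] at hmem
        rcases hp0.mem_or_mem hmem with h | h
        · exact h
        · exact absurd h hx0
      obtain ⟨j, h1, h2⟩ := ih P.divX hdeg' hP' hmem'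
      rw [Polynomial.coeff_divX] at h1 h2
      exact ⟨j + 1, h1, h2⟩
    · refine ⟨0, hc, ?_⟩
      have : φ (P.coeff 0) = Polynomial.eval₂ φ x P - Polynomial.eval₂ φ x P.divX * x := by
        rw [hsplit]; ring
      rw [this]
      exact Ideal.sub_mem _ (h01 hmem) (Ideal.mul_mem_left _ _ hx1)

open MvPolynomial

lemma aeval_finSuccEquiv {A : Type*} [CommRing A] [Algebra ℂ A] {k : ℕ}
    (x : Fin (k + 1) → A) (Q : MvPolynomial (Fin (k + 1)) ℂ) :
    MvPolynomial.aeval x Q =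
      Polynomial.eval₂ ((MvPolynomial.aeval (x ∘ Fin.succ)).toRingHom) (x 0)
        (MvPolynomial.finSuccEquiv ℂ k Q) := by
  have := MvPolynomial.ringHom_ext (σ := Fin (k+1)) (f := (MvPolynomial.aeval x).toRingHom)
    (g := (Polynomial.eval₂RingHom ((MvPolynomial.aeval (x ∘ Fin.succ)).toRingHom) (x 0)).comp
      ((MvPolynomial.finSuccEquiv ℂ k) : MvPolynomial (Fin (k+1)) ℂ →+* Polynomial (MvPolynomial (Fin k) ℂ)))
    (fun a => by simp [MvPolynomial.finSuccEquiv_apply])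
    (fun i => by
      refine Fin.cases ?_ (fun j => ?_) i
      · simp [MvPolynomial.finSuccEquiv_X_zero]
      · simp [MvPolynomial.finSuccEquiv_X_succ])
  exact congrFun (congrArg (fun f => f.toFun) this) Q

lemma no_long_chain {A : Type*} [CommRing A] [Algebra ℂ A] :
    ∀ (k : ℕ) (x : Fin k → A) (p : Fin (k + 1) → Ideal A),
      (∀ i, (p i).IsPrime) → (∀ i : Fin k, p i.castSucc ≤ p i.succ) →
      (∀ i : Fin k, x i ∈ p i.succ) → (∀ i : Fin k, x i ∉ p i.castSucc) →
      ∀ Q : MvPolynomial (Fin k) ℂ, Q ≠ 0 → (MvPolynomial.aeval x) Q ∈ p 0 → False := by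
  intro k
  induction k with
  | zero =>
    intro x p hprime _ _ _ Q hQ hmem
    obtain ⟨c, rfl⟩ := (MvPolynomial.C_surjective (Fin 0)) Q
    have hc : c ≠ 0 := fun h => hQ (by rw [h, map_zero])
    have hu : IsUnit ((MvPolynomial.aeval x) (MvPolynomial.C c)) := by
      rw [MvPolynomial.aeval_C]
      exact (isUnit_iff_ne_zero.mpr hc).map (algebraMap ℂ A)
    exact (hprime 0).ne_top (Ideal.eq_top_of_isUnit_mem _ hmem hu)
  | succ k ih =>
    intro x p hprime hmono hmem hnmem Q hQ haQ
    set P := MvPolynomial.finSuccEquiv ℂ k Q with hP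
    have hPne : P ≠ 0 := fun h => hQ (by
      have := congrArg (MvPolynomial.finSuccEquiv ℂ k).symm h
      rwa [AlgEquiv.symm_apply_apply, map_zero] at this)
    have h01 : p 0 ≤ p 1 := by
      have := hmono 0
      simpa using this
    have hx0 : x 0 ∉ p 0 := by
      have := hnmem 0
      simpa using this
    have hx1 : x 0 ∈ p 1 := by
      have := hmem 0
      simpa using this
    haveI := hprime 0
    obtain ⟨j, hj1, hj2⟩ := poly_trailing_mem ((MvPolynomial.aeval (x ∘ Fin.succ)).toRingHom)
      h01 hx0 hx1 P.natDegree P le_rfl hPne (by rw [← aeval_finSuccEquiv]; exact haQ)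
    refine ih (x ∘ Fin.succ) (p ∘ Fin.succ) (fun i => hprime _) (fun i => ?_) (fun i => ?_)
      (fun i => ?_) (P.coeff j) hj1 hj2
    · have := hmono i.succ
      rwa [← Fin.succ_castSucc] at this
    · exact hmem i.succ
    · have := hnmem i.succ
      rwa [← Fin.succ_castSucc] at this

open MvPolynomial in
lemma mem_span_monomials {N : ℕ} (p : MvPolynomial (Fin 3) ℂ) (hp : p.totalDegree ≤ N) :
    p ∈ Submodule.span ℂ
      ((Finset.image (fun g : Fin 3 → Fin (N + 1) =>
        (monomial (Finsupp.equivFunOnFinite.symm fun i => (g i : ℕ)) (1 : ℂ)))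
        Finset.univ : Finset (MvPolynomial (Fin 3) ℂ)) : Set (MvPolynomial (Fin 3) ℂ)) := by
  have hrep := p.support_sum_monomial_coeff
  rw [← hrep]
  refine Submodule.sum_mem _ fun β hβ => ?_
  have hle : ∀ i, β i ≤ N := by
    intro i
    refine le_trans ?_ (le_trans (MvPolynomial.le_totalDegree hβ) hp)
    by_cases h : β i = 0
    · simp [h]
    · exact Finset.single_le_sum (f := fun j => β j) (fun _ _ => Nat.zero_le _)
        (Finsupp.mem_support_iff.mpr h)
  have hmem : (monomial β (1 : ℂ)) ∈ (Finset.image (fun g : Fin 3 → Fin (N + 1) =>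
      (monomial (Finsupp.equivFunOnFinite.symm fun i => (g i : ℕ)) (1 : ℂ))) Finset.univ) := by
    refine Finset.mem_image.mpr ⟨fun i => ⟨β i, Nat.lt_succ_of_le (hle i)⟩, Finset.mem_univ _, ?_⟩
    congr 1
    ext i
    simp
  have heq : (monomial β) (MvPolynomial.coeff β p) = MvPolynomial.coeff β p • (monomial β (1 : ℂ)) := by
    rw [MvPolynomial.smul_monomial, smul_eq_mul, mul_one]
  rw [heq]
  exact Submodule.smul_mem _ _ (Submodule.subset_span hmem)

open MvPolynomial in
lemma exists_annihilator (x : Fin 4 → MvPolynomial (Fin 3) ℂ) :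
    ∃ Q : MvPolynomial (Fin 4) ℂ, Q ≠ 0 ∧ MvPolynomial.aeval x Q = 0 := by
  classical
  obtain ⟨E, hE⟩ : ∃ E, E = (Finset.univ.sup fun i => (x i).totalDegree) + 1 := ⟨_, rfl⟩
  obtain ⟨d, hd⟩ : ∃ d, d = 125 * E ^ 3 := ⟨_, rfl⟩
  obtain ⟨N, hN⟩ : ∃ N, N = 4 * d * E := ⟨_, rfl⟩
  set toF : (Fin 4 → Fin (d + 1)) → (Fin 4 →₀ ℕ) :=
    fun α => Finsupp.equivFunOnFinite.symm fun i => (α i : ℕ) with htoF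
  set v : (Fin 4 → Fin (d + 1)) → MvPolynomial (Fin 3) ℂ :=
    fun α => ∏ i, (x i) ^ ((α i : ℕ)) with hv
  have hvdeg : ∀ α, (v α).totalDegree ≤ N := by
    intro α
    calc (v α).totalDegree ≤ ∑ i, ((x i) ^ (α i : ℕ)).totalDegree :=
          MvPolynomial.totalDegree_finset_prod _ _
      _ ≤ ∑ _i : Fin 4, d * E := by
          refine Finset.sum_le_sum fun i _ => ?_
          refine le_trans (MvPolynomial.totalDegree_pow _ _) ?_
          refine Nat.mul_le_mul (Nat.lt_succ_iff.mp (α i).isLt) ?_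
          refine le_trans (Finset.le_sup (f := fun j => (x j).totalDegree) (Finset.mem_univ i)) ?_
          rw [hE]
          exact Nat.le_succ _
      _ = N := by
          rw [Finset.sum_const, Finset.card_univ, Fintype.card_fin, smul_eq_mul, hN]; ring
  set S : Finset (MvPolynomial (Fin 3) ℂ) := Finset.image (fun g : Fin 3 → Fin (N + 1) =>
    (monomial (Finsupp.equivFunOnFinite.symm fun i => (g i : ℕ)) (1 : ℂ))) Finset.univ with hS
  set V := Submodule.span ℂ (S : Set (MvPolynomial (Fin 3) ℂ)) with hV
  haveI : FiniteDimensional ℂ V := FiniteDimensional.span_of_finite ℂ (Finset.finite_toSet S)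
  have hdim : Module.finrank ℂ V ≤ (N + 1) ^ 3 := by
    refine le_trans (finrank_span_finset_le_card S) ?_
    calc S.card ≤ (Finset.univ : Finset (Fin 3 → Fin (N + 1))).card := Finset.card_image_le
      _ = (N + 1) ^ 3 := by
          rw [Finset.card_univ, Fintype.card_fun, Fintype.card_fin, Fintype.card_fin]
  set w : (Fin 4 → Fin (d + 1)) → V := fun α => ⟨v α, mem_span_monomials _ (hvdeg α)⟩ with hw
  have hnli : ¬ LinearIndependent ℂ w := by
    intro hli
    have hcard := hli.fintype_card_le_finrank
    have hcard2 : (d + 1) ^ 4 ≤ (N + 1) ^ 3 := by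
      refine le_trans (le_of_eq ?_) (le_trans hcard hdim)
      rw [Fintype.card_fun, Fintype.card_fin, Fintype.card_fin]
    have hdE : 1 ≤ d * E := by
      have h1 : 1 ≤ E := by rw [hE]; exact Nat.le_add_left 1 _
      have h3 : 1 ≤ E ^ 3 := Nat.one_le_pow _ _ (by omega)
      calc 1 ≤ (125 * E ^ 3) * E := by nlinarith
        _ = d * E := by rw [hd]
    have h1 : N + 1 ≤ 5 * (d * E) := by
      have h2 : N = 4 * (d * E) := by rw [hN]; ring
      omega
    have harith : (N + 1) ^ 3 < (d + 1) ^ 4 := by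
      calc (N + 1) ^ 3 ≤ (5 * (d * E)) ^ 3 := Nat.pow_le_pow_left h1 3
        _ = d ^ 4 := by rw [hd]; ring
        _ < (d + 1) ^ 4 := Nat.pow_lt_pow_left (Nat.lt_succ_self d) (by norm_num)
    omega
  obtain ⟨g, hsum, α₀, hα₀⟩ := Fintype.not_linearIndependent_iff.mp hnli
  have hinj : Function.Injective toF := by
    intro a b h
    have h2 : (fun i => ((a i : ℕ))) = fun i => ((b i : ℕ)) :=
      Finsupp.equivFunOnFinite.symm.injective h
    funext i
    exact Fin.val_injective (congrFun h2 i)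
  refine ⟨∑ α : Fin 4 → Fin (d + 1), monomial (toF α) (g α), ?_, ?_⟩
  · intro h
    apply hα₀
    have hc := congrArg (MvPolynomial.coeff (toF α₀)) h
    rw [MvPolynomial.coeff_zero, MvPolynomial.coeff_sum] at hc
    have hsingle : (∑ α : Fin 4 → Fin (d + 1),
        MvPolynomial.coeff (toF α₀) (monomial (toF α) (g α))) = g α₀ := by
      rw [Finset.sum_eq_single α₀]
      · rw [MvPolynomial.coeff_monomial, if_pos rfl]
      · intro b _ hb
        rw [MvPolynomial.coeff_monomial, if_neg (fun hh => hb (hinj hh))]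
      · intro h'; exact absurd (Finset.mem_univ _) h'
    rw [← hsingle]
    exact hc
  · have h0 : ∑ α : Fin 4 → Fin (d + 1), g α • v α = 0 := by
      have hc := congrArg V.subtype hsum
      rw [map_sum, map_zero] at hc
      simpa using hc
    rw [map_sum, ← h0]
    refine Finset.sum_congr rfl fun α _ => ?_
    rw [MvPolynomial.aeval_monomial]
    rw [Finsupp.prod_fintype _ _ (fun i => pow_zero _)]
    rw [Algebra.smul_def]
    congr 1

lemma dim_S3_le : Order.krullDim (PrimeSpectrum (MvPolynomial (Fin 3) ℂ)) ≤ 3 := by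
  refine iSup_le fun p => ?_
  have hlen : p.length ≤ 3 := by
    by_contra h
    push_neg at h
    have h4 : 4 ≤ p.length := h
    let idx : Fin 5 → Fin (p.length + 1) := fun i => ⟨i, by omega⟩
    set q : Fin 5 → Ideal (MvPolynomial (Fin 3) ℂ) := fun i => (p.toFun (idx i)).asIdeal with hq
    have hqp : ∀ i, (q i).IsPrime := fun i => (p.toFun (idx i)).2
    have hlt : ∀ i : Fin 4, q i.castSucc < q i.succ := by
      intro i
      rw [hq]
      simp only
      rw [PrimeSpectrum.asIdeal_lt_asIdeal]
      refine p.strictMono ?_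
      rw [Fin.lt_def]
      simp [idx]
    have hex := fun i : Fin 4 => SetLike.exists_of_lt (hlt i)
    choose xx hx1 hx2 using hex
    obtain ⟨Q, hQne, hQz⟩ := exists_annihilator xx
    refine no_long_chain 4 xx q hqp (fun i => le_of_lt (hlt i)) hx1 hx2 Q hQne ?_
    rw [hQz]
    exact (q 0).zero_mem
  exact_mod_cast hlen

/-- The Noether-normalization base map `ℂ[u,v,w] → ℂ[A,B,C,D,T]`, `u ↦ C`, `v ↦ D`, `w ↦ T`. -/
noncomputable def θ : MvPolynomial (Fin 3) ℂ →ₐ[ℂ] MvPolynomial (Fin 5) ℂ :=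
  aeval ![X 2, X 3, X 4]

noncomputable def χ : MvPolynomial (Fin 3) ℂ →ₐ[ℂ] (MvPolynomial (Fin 5) ℂ ⧸ I_T) :=
  (Ideal.Quotient.mkₐ ℂ I_T).comp θ

/-- monic polynomial over the base killing `A`. -/
noncomputable def qA : Polynomial (MvPolynomial (Fin 3) ℂ) :=
  Polynomial.X ^ 12 + Polynomial.C (3 * (X 2) ^ 5) * Polynomial.X ^ 10
    + Polynomial.C (3 * (X 2) ^ 10) * Polynomial.X ^ 8
    + Polynomial.C ((X 2) ^ 15) * Polynomial.X ^ 6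
    - Polynomial.C ((X 0) ^ 2 * X 1) * Polynomial.X ^ 4
    - Polynomial.C ((X 2) ^ 5 * (X 0) ^ 2 * X 1 + (X 0) ^ 3 * X 1) * Polynomial.X ^ 2

/-- monic polynomial over the base killing `B`. -/
noncomputable def qB : Polynomial (MvPolynomial (Fin 3) ℂ) :=
  Polynomial.X ^ 6 - Polynomial.C (2 * X 1) * Polynomial.X ^ 4
    + Polynomial.C ((X 2) ^ 5 * X 1) * Polynomial.X ^ 3
    + Polynomial.C ((X 1) ^ 2) * Polynomial.X ^ 2
    - Polynomial.C ((X 2) ^ 5 * (X 1) ^ 2 + X 0 * (X 1) ^ 2) * Polynomial.X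

lemma qA_monic : qA.Monic := by unfold qA; monicity!

lemma qB_monic : qB.Monic := by unfold qB; monicity!

lemma m₁_mem : m₁ ∈ I_T := Ideal.subset_span (by simp)
lemma m₃_mem : m₃ ∈ I_T := Ideal.subset_span (by simp)

lemma qA_eval_mem :
    Polynomial.eval₂ θ.toRingHom (X 0 : MvPolynomial (Fin 5) ℂ) qA ∈ I_T := by
  have he : Polynomial.eval₂ θ.toRingHom (X 0 : MvPolynomial (Fin 5) ℂ) qA =
      (((X 0) ^ 4 + (X 4) ^ 5 * (X 0) ^ 2) ^ 2
        + ((X 0) ^ 4 + (X 4) ^ 5 * (X 0) ^ 2) * (X 1 * X 2)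
        + (X 1) ^ 2 * (X 2) ^ 2 - (X 2) ^ 2 * X 3) * m₁
      + (X 2) ^ 3 * m₃ := by
    simp only [qA, θ, m₁, m₃, Polynomial.eval₂_add, Polynomial.eval₂_sub, Polynomial.eval₂_mul,
      Polynomial.eval₂_pow, Polynomial.eval₂_X, Polynomial.eval₂_C, map_add, map_mul, map_pow,
      map_ofNat, Polynomial.eval₂_ofNat, AlgHom.toRingHom_eq_coe, RingHom.coe_coe, AlgHom.coe_toRingHom, aeval_X, Matrix.cons_val_zero, Matrix.cons_val_one,
      Matrix.head_cons, Matrix.cons_val_two, Matrix.tail_cons]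
    ring
  rw [he]
  exact Ideal.add_mem _ (Ideal.mul_mem_left _ _ m₁_mem) (Ideal.mul_mem_left _ _ m₃_mem)

lemma qB_eval_mem :
    Polynomial.eval₂ θ.toRingHom (X 1 : MvPolynomial (Fin 5) ℂ) qB ∈ I_T := by
  have he : Polynomial.eval₂ θ.toRingHom (X 1 : MvPolynomial (Fin 5) ℂ) qB =
      (m₃ + 2 * (X 0) ^ 2 * X 3 + (X 4) ^ 5 * X 3) * m₃ + (X 3) ^ 2 * m₁ := by
    simp only [qB, θ, m₁, m₃, Polynomial.eval₂_add, Polynomial.eval₂_sub, Polynomial.eval₂_mul,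
      Polynomial.eval₂_pow, Polynomial.eval₂_X, Polynomial.eval₂_C, map_add, map_mul, map_pow,
      map_ofNat, Polynomial.eval₂_ofNat, AlgHom.toRingHom_eq_coe, RingHom.coe_coe, AlgHom.coe_toRingHom, aeval_X, Matrix.cons_val_zero, Matrix.cons_val_one,
      Matrix.head_cons, Matrix.cons_val_two, Matrix.tail_cons]
    ring
  rw [he]
  exact Ideal.add_mem _ (Ideal.mul_mem_left _ _ m₃_mem) (Ideal.mul_mem_left _ _ m₁_mem)

lemma upper_bound : ringKrullDim (MvPolynomial (Fin 5) ℂ ⧸ I_T) ≤ 3 := by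
  letI : Algebra (MvPolynomial (Fin 3) ℂ) (MvPolynomial (Fin 5) ℂ ⧸ I_T) :=
    χ.toRingHom.toAlgebra
  have halg : algebraMap (MvPolynomial (Fin 3) ℂ) (MvPolynomial (Fin 5) ℂ ⧸ I_T)
      = χ.toRingHom := rfl
  have hcomp : χ.toRingHom
      = (Ideal.Quotient.mk I_T).comp θ.toRingHom := rfl
  have hXint : ∀ i : Fin 5,
      IsIntegral (MvPolynomial (Fin 3) ℂ) (Ideal.Quotient.mk I_T (X i)) := by
    intro i
    fin_cases i
    · exact ⟨qA, qA_monic, by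
        rw [halg, hcomp, ← Polynomial.hom_eval₂, Ideal.Quotient.eq_zero_iff_mem]
        exact qA_eval_mem⟩
    · exact ⟨qB, qB_monic, by
        rw [halg, hcomp, ← Polynomial.hom_eval₂, Ideal.Quotient.eq_zero_iff_mem]
        exact qB_eval_mem⟩
    · exact ⟨Polynomial.X - Polynomial.C (X 0), (Polynomial.monic_X_sub_C _), by
        simp [halg, χ, θ]⟩
    · exact ⟨Polynomial.X - Polynomial.C (X 1), (Polynomial.monic_X_sub_C _), by
        simp [halg, χ, θ]⟩
    · exact ⟨Polynomial.X - Polynomial.C (X 2), (Polynomial.monic_X_sub_C _), by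
        simp [halg, χ, θ]⟩
  have hint : ∀ r : MvPolynomial (Fin 5) ℂ ⧸ I_T, IsIntegral (MvPolynomial (Fin 3) ℂ) r := by
    intro r
    obtain ⟨f, rfl⟩ := Ideal.Quotient.mk_surjective r
    induction f using MvPolynomial.induction_on with
    | C a =>
      have : (Ideal.Quotient.mk I_T) (C a)
          = algebraMap (MvPolynomial (Fin 3) ℂ) (MvPolynomial (Fin 5) ℂ ⧸ I_T) (C a) := by
        simp [halg, χ, θ, ← Ideal.Quotient.mk_algebraMap]
      rw [this]
      exact isIntegral_algebraMap
    | add p q hp hq => rw [map_add]; exact hp.add hq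
    | mul_X p i hp => rw [map_mul]; exact hp.mul (hXint i)
  have hsm : StrictMono (fun P : PrimeSpectrum (MvPolynomial (Fin 5) ℂ ⧸ I_T) =>
      (PrimeSpectrum.comap (algebraMap (MvPolynomial (Fin 3) ℂ)
        (MvPolynomial (Fin 5) ℂ ⧸ I_T))) P) := by
    intro P Q hPQ
    rw [← PrimeSpectrum.asIdeal_lt_asIdeal] at hPQ ⊢
    obtain ⟨xe, hmem, hnmem⟩ := SetLike.exists_of_lt hPQ
    haveI := P.2
    exact Ideal.comap_lt_comap_of_integral_mem_sdiff (le_of_lt hPQ) ⟨hmem, hnmem⟩ (hint xe)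
  calc ringKrullDim (MvPolynomial (Fin 5) ℂ ⧸ I_T)
      ≤ Order.krullDim (PrimeSpectrum (MvPolynomial (Fin 3) ℂ)) :=
        Order.krullDim_le_of_strictMono _ hsm
    _ ≤ 3 := dim_S3_le

/-- Polynomial parametrization of (part of) `V(I_T)`: `x = X 0`, `y = X 1`, `z = X 2`. -/
noncomputable def φ0 : MvPolynomial (Fin 5) ℂ →ₐ[ℂ] MvPolynomial (Fin 3) ℂ :=
  aeval ![X 0 * X 2 * (1 + X 2),
          (X 0) ^ 2 * (X 2) ^ 3 * (1 + X 2) ^ 2,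
          (X 0) ^ 2 * X 2 * (1 + X 2) ^ 2 + (X 2) ^ 4 * (X 1) ^ 5,
          (X 0) ^ 4 * (X 2) ^ 7 * (1 + X 2) ^ 3,
          X 2 * X 1]

noncomputable def ψ1 : MvPolynomial (Fin 3) ℂ →ₐ[ℂ] MvPolynomial (Fin 2) ℂ :=
  aeval ![0, X 0, X 1]

noncomputable def ψ2 : MvPolynomial (Fin 2) ℂ →ₐ[ℂ] MvPolynomial (Fin 1) ℂ :=
  aeval ![X 0, 1]

noncomputable def ψ3 : MvPolynomial (Fin 1) ℂ →ₐ[ℂ] ℂ :=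
  aeval ![0]

lemma φ0_kills : ∀ a ∈ I_T, φ0.toRingHom a = 0 := by
  have h : I_T ≤ RingHom.ker φ0.toRingHom := by
    rw [I_T, Ideal.span_le]
    rintro f hf
    simp only [Set.mem_insert_iff, Set.mem_singleton_iff] at hf
    rcases hf with rfl | rfl | rfl <;>
      (rw [SetLike.mem_coe, RingHom.mem_ker]
       simp only [m₁, m₂, m₃, φ0, map_sub, map_add, map_mul, map_pow, map_one,
         AlgHom.toRingHom_eq_coe, RingHom.coe_coe, aeval_X, Matrix.cons_val_zero,
         Matrix.cons_val_one, Matrix.head_cons, Matrix.cons_val_two, Matrix.tail_cons,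
         Matrix.cons_val_three, Matrix.cons_val_four]
       ring)
  exact fun a ha => h ha

lemma one_add_X2_ne : (1 + X 2 : MvPolynomial (Fin 3) ℂ) ≠ 0 := by
  intro h
  have h2 := congrArg MvPolynomial.constantCoeff h
  simp at h2

lemma X1_sub_one_ne : (X 1 - 1 : MvPolynomial (Fin 2) ℂ) ≠ 0 := by
  intro h
  have h2 := congrArg MvPolynomial.constantCoeff h
  simp at h2

lemma lower_bound : 3 ≤ ringKrullDim (MvPolynomial (Fin 5) ℂ ⧸ I_T) := by
  have h0 := φ0_kills
  let Φ0 := Ideal.Quotient.lift I_T φ0.toRingHom h0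
  let Φ1 := Ideal.Quotient.lift I_T (ψ1.toRingHom.comp φ0.toRingHom)
    (fun a ha => by rw [RingHom.comp_apply, h0 a ha, map_zero])
  let Φ2 := Ideal.Quotient.lift I_T ((ψ2.toRingHom.comp ψ1.toRingHom).comp φ0.toRingHom)
    (fun a ha => by rw [RingHom.comp_apply, h0 a ha, map_zero])
  let Φ3 := Ideal.Quotient.lift I_T
    ((ψ3.toRingHom.comp (ψ2.toRingHom.comp ψ1.toRingHom)).comp φ0.toRingHom)
    (fun a ha => by rw [RingHom.comp_apply, h0 a ha, map_zero])
  haveI k0 : (RingHom.ker Φ0).IsPrime := RingHom.ker_isPrime _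
  haveI k1 : (RingHom.ker Φ1).IsPrime := RingHom.ker_isPrime _
  haveI k2 : (RingHom.ker Φ2).IsPrime := RingHom.ker_isPrime _
  haveI k3 : (RingHom.ker Φ3).IsPrime := RingHom.ker_isPrime _
  have val0 : ∀ f, Φ0 (Ideal.Quotient.mk I_T f) = φ0.toRingHom f :=
    fun f => Ideal.Quotient.lift_mk _ _ _
  have val1 : ∀ f, Φ1 (Ideal.Quotient.mk I_T f) = ψ1.toRingHom (φ0.toRingHom f) :=
    fun f => Ideal.Quotient.lift_mk _ _ _
  have val2 : ∀ f, Φ2 (Ideal.Quotient.mk I_T f)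
      = ψ2.toRingHom (ψ1.toRingHom (φ0.toRingHom f)) :=
    fun f => Ideal.Quotient.lift_mk _ _ _
  have val3 : ∀ f, Φ3 (Ideal.Quotient.mk I_T f)
      = ψ3.toRingHom (ψ2.toRingHom (ψ1.toRingHom (φ0.toRingHom f))) :=
    fun f => Ideal.Quotient.lift_mk _ _ _
  have le01 : RingHom.ker Φ0 ≤ RingHom.ker Φ1 := by
    intro r hr
    obtain ⟨f, rfl⟩ := Ideal.Quotient.mk_surjective r
    rw [RingHom.mem_ker] at hr ⊢
    rw [val0] at hr
    rw [val1, hr, map_zero]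
  have le12 : RingHom.ker Φ1 ≤ RingHom.ker Φ2 := by
    intro r hr
    obtain ⟨f, rfl⟩ := Ideal.Quotient.mk_surjective r
    rw [RingHom.mem_ker] at hr ⊢
    rw [val1] at hr
    rw [val2, hr, map_zero]
  have le23 : RingHom.ker Φ2 ≤ RingHom.ker Φ3 := by
    intro r hr
    obtain ⟨f, rfl⟩ := Ideal.Quotient.mk_surjective r
    rw [RingHom.mem_ker] at hr ⊢
    rw [val2] at hr
    rw [val3, hr, map_zero]
  -- witness for step 0 : `A`
  have w1not : Φ0 (Ideal.Quotient.mk I_T (X 0)) ≠ 0 := by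
    rw [val0]
    have hv : φ0.toRingHom (X 0 : MvPolynomial (Fin 5) ℂ)
        = X 0 * X 2 * (1 + X 2) := by
      simp [φ0]
    rw [hv]
    exact mul_ne_zero (mul_ne_zero (MvPolynomial.X_ne_zero _) (MvPolynomial.X_ne_zero _))
      one_add_X2_ne
  have w1mem : Φ1 (Ideal.Quotient.mk I_T (X 0)) = 0 := by
    rw [val1]
    simp [φ0, ψ1]
  -- witness for step 1 : `T⁵ - C`
  have w2not : Φ1 (Ideal.Quotient.mk I_T ((X 4) ^ 5 - X 2)) ≠ 0 := by
    rw [val1]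
    have hv : ψ1.toRingHom (φ0.toRingHom ((X 4 : MvPolynomial (Fin 5) ℂ) ^ 5 - X 2))
        = (X 0) ^ 5 * (X 1) ^ 4 * (X 1 - 1) := by
      simp [φ0, ψ1]
      ring
    rw [hv]
    exact mul_ne_zero (mul_ne_zero (pow_ne_zero _ (MvPolynomial.X_ne_zero _))
      (pow_ne_zero _ (MvPolynomial.X_ne_zero _))) X1_sub_one_ne
  have w2mem : Φ2 (Ideal.Quotient.mk I_T ((X 4) ^ 5 - X 2)) = 0 := by
    rw [val2]
    have hv : ψ1.toRingHom (φ0.toRingHom ((X 4 : MvPolynomial (Fin 5) ℂ) ^ 5 - X 2))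
        = (X 0) ^ 5 * (X 1) ^ 4 * (X 1 - 1) := by
      simp [φ0, ψ1]
      ring
    rw [hv]
    simp [ψ2]
  -- witness for step 2 : `T`
  have w3not : Φ2 (Ideal.Quotient.mk I_T (X 4)) ≠ 0 := by
    rw [val2]
    have hv : ψ2.toRingHom (ψ1.toRingHom (φ0.toRingHom (X 4 : MvPolynomial (Fin 5) ℂ)))
        = X 0 := by
      simp [φ0, ψ1, ψ2]
    rw [hv]
    exact MvPolynomial.X_ne_zero _
  have w3mem : Φ3 (Ideal.Quotient.mk I_T (X 4)) = 0 := by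
    rw [val3]
    simp [φ0, ψ1, ψ2, ψ3]
  let P : Fin 4 → PrimeSpectrum (MvPolynomial (Fin 5) ℂ ⧸ I_T) :=
    ![⟨RingHom.ker Φ0, k0⟩, ⟨RingHom.ker Φ1, k1⟩, ⟨RingHom.ker Φ2, k2⟩, ⟨RingHom.ker Φ3, k3⟩]
  have hstep : ∀ i : Fin 3, P i.castSucc < P i.succ := by
    intro i
    fin_cases i
    · show (⟨RingHom.ker Φ0, k0⟩ : PrimeSpectrum _) < ⟨RingHom.ker Φ1, k1⟩
      rw [← PrimeSpectrum.asIdeal_lt_asIdeal]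
      exact SetLike.lt_iff_le_and_exists.mpr ⟨le01, Ideal.Quotient.mk I_T (X 0),
        RingHom.mem_ker.mpr w1mem, fun hc => w1not (RingHom.mem_ker.mp hc)⟩
    · show (⟨RingHom.ker Φ1, k1⟩ : PrimeSpectrum _) < ⟨RingHom.ker Φ2, k2⟩
      rw [← PrimeSpectrum.asIdeal_lt_asIdeal]
      exact SetLike.lt_iff_le_and_exists.mpr ⟨le12, Ideal.Quotient.mk I_T ((X 4) ^ 5 - X 2),
        RingHom.mem_ker.mpr w2mem, fun hc => w2not (RingHom.mem_ker.mp hc)⟩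
    · show (⟨RingHom.ker Φ2, k2⟩ : PrimeSpectrum _) < ⟨RingHom.ker Φ3, k3⟩
      rw [← PrimeSpectrum.asIdeal_lt_asIdeal]
      exact SetLike.lt_iff_le_and_exists.mpr ⟨le23, Ideal.Quotient.mk I_T (X 4),
        RingHom.mem_ker.mpr w3mem, fun hc => w3not (RingHom.mem_ker.mp hc)⟩
  let c : LTSeries (PrimeSpectrum (MvPolynomial (Fin 5) ℂ ⧸ I_T)) := ⟨3, P, hstep⟩
  have hle := Order.LTSeries.length_le_krullDim c
  have hc3 : c.length = 3 := rfl
  rw [hc3] at hle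
  unfold ringKrullDim
  exact_mod_cast hle

/-- The Krull dimension of `R = ℂ[A,B,C,D,T]/I_T` equals 3. -/
theorem stmt_6 : ringKrullDim (MvPolynomial (Fin 5) ℂ ⧸ I_T) = 3 :=
  le_antisymm upper_bound lower_bound
end

section
/- Let A be a nontrivial commutative ring equipped with an ℕ-grading, i.e., an internal direct sum decomposition A = ⊕_{n ∈ ℕ} 𝒜ₙ into additive subgroups with 𝒜ₘ · 𝒜ₙ ⊆ 𝒜_{m+n} and 1 ∈ 𝒜₀ (a graded ring structure). Suppose t ∈ 𝒜_d is a homogeneous element of degree d > 0 which is not a zero divisor in A, and suppose the quotient ring A/(t) is an integral domain. Then A is an integral domain. -/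
/-!
Since `t` has positive degree and is a nonzerodivisor, multiplying by `t` raises the top degree of
a nonzero element, so `t` can be divided out of a nonzero element only finitely often: every
`x ≠ 0` is `t ^ n * u` with `u ∉ (t)`. If `x * y = 0` with `x = t ^ m * u` and `y = t ^ n * v`,
cancelling `t ^ (m + n)` gives `u * v = 0 ∈ (t)`, contradicting primality of `(t)`.
-/

open DirectSum

section Factorization

variable {R : Type*} [CommRing R] {t : R}

theorem isDomain_of_isPrime_span_of_forall_eq_pow_mul (htnzd : t ∈ nonZeroDivisors R)
    (hprime : (Ideal.span {t}).IsPrime)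
    (hfactor : ∀ x : R, x ≠ 0 → ∃ n u, u ∉ Ideal.span {t} ∧ x = t ^ n * u) : IsDomain R := by
  have : Nontrivial R :=
    Ideal.Quotient.mk_surjective.nontrivial (β := R ⧸ Ideal.span {t})
  have : NoZeroDivisors R := ⟨fun {x y} hxy => by
    by_contra! hne
    obtain ⟨m, u, hu, rfl⟩ := hfactor x hne.1
    obtain ⟨n, v, hv, rfl⟩ := hfactor y hne.2
    have huv : u * v = 0 := by
      refine (mul_left_mem_nonZeroDivisors_eq_zero_iff (pow_mem htnzd (m + n))).mp ?_
      linear_combination hxy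
    exact (hprime.mem_or_mem (huv ▸ Ideal.zero_mem _)).elim hu hv⟩
  exact NoZeroDivisors.to_isDomain R

end Factorization

namespace GradedRing

variable {A : Type*} [CommRing A] (𝒜 : ℕ → AddSubgroup A) [GradedRing 𝒜]

open Classical in
noncomputable def topDegree (x : A) : ℕ := (decompose 𝒜 x).support.sup id

variable {𝒜}

open Classical in
theorem le_topDegree {x : A} {i : ℕ} (h : proj 𝒜 i x ≠ 0) : i ≤ topDegree 𝒜 x :=
  Finset.le_sup (f := id) ((mem_support_iff 𝒜 x i).mpr h)

open Classical in
theorem proj_topDegree_ne_zero {x : A} (hx : x ≠ 0) : proj 𝒜 (topDegree 𝒜 x) x ≠ 0 := by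
  have hne : (decompose 𝒜 x).support.Nonempty := by
    rw [Finset.nonempty_iff_ne_empty, Ne, DFinsupp.support_eq_empty]
    exact fun h => hx (by simpa using congrArg (decompose 𝒜).symm h)
  obtain ⟨i, hi, hsup⟩ := Finset.exists_mem_eq_sup _ hne id
  rw [topDegree, hsup, ← mem_support_iff]
  exact hi

theorem add_topDegree_le_topDegree_mul {d : ℕ} {t u : A} (ht : t ∈ 𝒜 d)
    (htnzd : t ∈ nonZeroDivisors A) (hu : u ≠ 0) :
    d + topDegree 𝒜 u ≤ topDegree 𝒜 (t * u) := by
  apply le_topDegree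
  rw [proj_apply, coe_decompose_mul_add_of_left_mem 𝒜 ht, ne_eq,
    mul_left_mem_nonZeroDivisors_eq_zero_iff htnzd]
  exact proj_topDegree_ne_zero hu

theorem exists_eq_pow_mul_notMem_span {d : ℕ} (hd : 0 < d) {t : A} (ht : t ∈ 𝒜 d)
    (htnzd : t ∈ nonZeroDivisors A) (x : A) (hx : x ≠ 0) :
    ∃ n u, u ∉ Ideal.span {t} ∧ x = t ^ n * u := by
  induction hN : topDegree 𝒜 x using Nat.strong_induction_on generalizing x with
  | _ N ih =>
    by_cases hmem : x ∈ Ideal.span {t}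
    · obtain ⟨u, rfl⟩ := Ideal.mem_span_singleton'.mp hmem
      rw [mul_comm] at hx hN
      have hu : u ≠ 0 := right_ne_zero_of_mul hx
      have hlt : topDegree 𝒜 u < N := by
        have := add_topDegree_le_topDegree_mul ht htnzd hu
        omega
      obtain ⟨n, v, hv, rfl⟩ := ih _ hlt u hu rfl
      exact ⟨n + 1, v, hv, by ring⟩
    · exact ⟨0, x, hmem, by ring⟩

end GradedRing

theorem stmt_8_general (A : Type*) [CommRing A]
    (𝒜 : ℕ → AddSubgroup A) [GradedRing 𝒜]
    (d : ℕ) (hd : 0 < d) (t : A) (ht : t ∈ 𝒜 d)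
    (htnzd : t ∈ nonZeroDivisors A)
    (hquot : IsDomain (A ⧸ Ideal.span {t})) :
    IsDomain A :=
  isDomain_of_isPrime_span_of_forall_eq_pow_mul htnzd
    ((Ideal.Quotient.isDomain_iff_prime _).mp hquot)
    (GradedRing.exists_eq_pow_mul_notMem_span hd ht htnzd)

/-- Let `A` be a nontrivial commutative ring with an ℕ-grading by additive
subgroups `𝒜ₙ`.  If `t ∈ 𝒜_d` is a homogeneous element of positive degree `d`
which is not a zero divisor, and the quotient `A/(t)` is an integral domain,
then `A` is an integral domain. -/
theorem stmt_8 (A : Type*) [CommRing A] [Nontrivial A]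
    (𝒜 : ℕ → AddSubgroup A) [GradedRing 𝒜]
    (d : ℕ) (hd : 0 < d) (t : A) (ht : t ∈ 𝒜 d)
    (htnzd : t ∈ nonZeroDivisors A)
    (hquot : IsDomain (A ⧸ Ideal.span {t})) :
    IsDomain A :=
  stmt_8_general A 𝒜 d hd t ht htnzd hquot
end
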